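/- arXiv:1903.05774 — 2 statements merged into one kernel-verified Lean document; each statement's English description precedes it below -/
import Mathlib

section
/- For the α-version geometries encoding a symmetric glue function G on n glues, the geometry γα(i) is abut-compatible with the geometry γα(j) if and only if G i j = true. -/
def abutCompat {n : ℕ} (g h : Fin n → Bool) : Prop :=
  ∀ i : Fin n, ¬(g i = true ∧ h (Fin.rev i) = true)

def gammaAlpha {n : ℕ} (G : Fin n → Fin n → Bool) (i : Fin n) : Fin (4 * n) → Bool :=
  fun p => decide (p.val = i.val ∨ ∃ j : Fin n, G i j = false ∧ p.val = 4 * n - 1 - j.val)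

theorem gammaAlpha_compat_iff {n : ℕ} (hn : 1 ≤ n) (G : Fin n → Fin n → Bool)
    (hsym : ∀ i j, G i j = G j i) (i j : Fin n) :
    abutCompat (gammaAlpha G i) (gammaAlpha G j) ↔ G i j = true := by
  have hi := i.isLt
  have hj := j.isLt
  constructor
  · intro h
    by_contra hG
    have hG' : G i j = false := by
      cases hGij : G i j with
      | false => rfl
      | true => exact absurd hGij hG
    have hG'' : G j i = false := by rw [hsym]; exact hG'
    exact h ⟨i.val, by omega⟩ ⟨by simp [gammaAlpha],
      by simp only [gammaAlpha, Fin.rev, decide_eq_true_eq]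
         exact Or.inr ⟨i, hG'', by omega⟩⟩
  · intro hG p ⟨hp1, hp2⟩
    simp only [gammaAlpha, Fin.rev, decide_eq_true_eq] at hp1 hp2
    rcases hp1 with h1 | ⟨k, hk, h1⟩ <;> rcases hp2 with h2 | ⟨k', hk', h2⟩
    · omega
    · have hki := k'.isLt
      have : k' = i := Fin.ext (by omega)
      rw [this, hsym] at hk'
      rw [hk'] at hG; exact Bool.false_ne_true hG
    · have hkj := k.isLt
      have : k = j := Fin.ext (by omega)
      rw [this] at hk
      rw [hk] at hG; exact Bool.false_ne_true hG
    · have := k.isLt; have := k'.isLt; omega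
end

section
/- For the β-version geometries encoding a symmetric glue function G on n glues, the geometry γβ(i) is abut-compatible with the geometry γβ(j) if and only if G i j = true. -/
def gammaBeta {n : ℕ} (G : Fin n → Fin n → Bool) (i : Fin n) : Fin (4 * n) → Bool :=
  fun p => decide (p.val = n + i.val ∨ ∃ j : Fin n, G i j = false ∧ p.val = 3 * n - 1 - j.val)

theorem gammaBeta_compat_iff {n : ℕ} (hn : 1 ≤ n) (G : Fin n → Fin n → Bool)
    (hsym : ∀ i j, G i j = G j i) (i j : Fin n) :
    abutCompat (gammaBeta G i) (gammaBeta G j) ↔ G i j = true := by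
  have hi := i.isLt
  have hj := j.isLt
  constructor
  · intro h
    by_contra hG
    have hGf : G i j = false := by simpa using hG
    refine h ⟨n + i.val, by omega⟩ ⟨?_, ?_⟩
    · simp [gammaBeta]
    · simp only [gammaBeta, decide_eq_true_eq, Fin.val_rev]
      right
      exact ⟨i, by rw [hsym]; exact hGf, by omega⟩
  · intro hG p ⟨hp, hq⟩
    simp only [gammaBeta, decide_eq_true_eq, Fin.val_rev] at hp hq
    have hpv := p.isLt
    rcases hp with hp | ⟨k, hk, hp⟩ <;> rcases hq with hq | ⟨m, hm, hq⟩
    · omega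
    · have hm2 := m.isLt
      have : m = i := by apply Fin.ext; omega
      subst this
      rw [hsym, hG] at hm; exact absurd hm (by simp)
    · have hk2 := k.isLt
      have : k = j := by apply Fin.ext; omega
      subst this
      rw [hG] at hk; exact absurd hk (by simp)
    · have hm2 := m.isLt
      have hk2 := k.isLt
      omega
end
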